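/- The reduction ▷_{βΩ}* satisfies the Church–Rosser property: if t ▷_{βΩ}* t₁ and t ▷_{βΩ}* t₂, then there is a term t₃ such that t₁ ▷_{βΩ}* t₃ and t₂ ▷_{βΩ}* t₃. -/

import Mathlib

/-! ## A de Bruijn presentation of the untyped λ-calculus -/

/-- Untyped λ-terms in de Bruijn representation. -/
inductive Lam : Type where
  | var : ℕ → Lam
  | app : Lam → Lam → Lam
  | abs : Lam → Lam
  deriving DecidableEq

namespace Lam

/-- Lifting of de Bruijn indices (cutoff `d`). -/
def lift (d : ℕ) : Lam → Lam
  | var n => if n < d then var n else var (n + 1)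
  | app a b => app (lift d a) (lift d b)
  | abs a => abs (lift (d + 1) a)

/-- Capture-avoiding substitution of `u` for the free variable `k`. -/
def subst : Lam → ℕ → Lam → Lam
  | var n, k, u => if n = k then u else if k < n then var (n - 1) else var n
  | app a b, k, u => app (subst a k u) (subst b k u)
  | abs a, k, u => abs (subst a (k + 1) (lift 0 u))

/-- One-step β-reduction `▷`. -/
inductive Step : Lam → Lam → Prop
  | beta (a b : Lam) : Step (app (abs a) b) (subst a 0 b)
  | appL {a a' : Lam} (b : Lam) : Step a a' → Step (app a b) (app a' b)
  | appR (a : Lam) {b b' : Lam} : Step b b' → Step (app a b) (app a b')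
  | abs {a a' : Lam} : Step a a' → Step (Lam.abs a) (Lam.abs a')

/-- β-reduction `▷*` : reflexive and transitive closure of `▷`. -/
def Steps : Lam → Lam → Prop := Relation.ReflTransGen Step

/-- β-normal term. -/
def Normal (t : Lam) : Prop := ∀ t', ¬ Step t t'

/-- `Free x t` : the variable `x` (de Bruijn index, seen from the root) occurs free in `t`. -/
def Free : ℕ → Lam → Prop
  | x, var n => x = n
  | x, app a b => Free x a ∨ Free x b
  | x, abs a => Free (x + 1) a

/-- Closed term. -/
def Closed (t : Lam) : Prop := ∀ x, ¬ Free x t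

/-- A variable applied to a (possibly empty) list of arguments. -/
inductive HeadVarApp : Lam → Prop
  | var (n : ℕ) : HeadVarApp (var n)
  | app {a : Lam} (b : Lam) : HeadVarApp a → HeadVarApp (app a b)

/-- Head normal forms `λx₁…λxₙ.(y t₁ … tₘ)`. -/
inductive IsHNF : Lam → Prop
  | head {t : Lam} : HeadVarApp t → IsHNF t
  | abs {a : Lam} : IsHNF a → IsHNF (Lam.abs a)

/-- A term is solvable if it β-reduces to a head normal form. -/
def Solvable (t : Lam) : Prop := ∃ h, Steps t h ∧ IsHNF h

/-- `Ω = (λx.(x x))(λx.(x x))`. -/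
def Omega : Lam := app (abs (app (var 0) (var 0))) (abs (app (var 0) (var 0)))

/-- Ω-reduction `▷_Ω` : replace an unsolvable subterm by `Ω`. -/
inductive OmegaStep : Lam → Lam → Prop
  | unsolv {t : Lam} : ¬ Solvable t → OmegaStep t Omega
  | appL {a a' : Lam} (b : Lam) : OmegaStep a a' → OmegaStep (app a b) (app a' b)
  | appR (a : Lam) {b b' : Lam} : OmegaStep b b' → OmegaStep (app a b) (app a b')
  | abs {a a' : Lam} : OmegaStep a a' → OmegaStep (Lam.abs a) (Lam.abs a')

/-- `▷_Ω*`. -/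
def OmegaSteps : Lam → Lam → Prop := Relation.ReflTransGen OmegaStep

/-- `▷_{βΩ}` : union of `▷` and `▷_Ω`. -/
def BOStep (t t' : Lam) : Prop := Step t t' ∨ OmegaStep t t'

/-- `▷_{βΩ}*`. -/
def BOSteps : Lam → Lam → Prop := Relation.ReflTransGen BOStep

/-- `u ≃ v` : equality in the λ-theory H (common `▷_{βΩ}*`-reduct). -/
def SimH (u v : Lam) : Prop := ∃ w, BOSteps u w ∧ BOSteps v w

/-- Simultaneous (parallel) substitution along `σ`. -/
def psubst (σ : ℕ → Lam) : Lam → Lam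
  | var n => σ n
  | app a b => app (psubst σ a) (psubst σ b)
  | abs a => abs (psubst (fun n => match n with | 0 => var 0 | m + 1 => lift 0 (σ m)) a)

/-- `(x V)` : the application of a head `h` to a list of arguments. -/
def mkApps (h : Lam) (as : List Lam) : Lam := as.foldl app h

/-- `U ⊑ V` : some initial segment of `V` is obtained from `U` by a substitution
followed by componentwise β-reductions. -/
def Sqsubseteq (U V : List Lam) : Prop :=
  ∃ (σ : ℕ → Lam) (W : List Lam), W <+: V ∧
    List.Forall₂ (fun u w => Steps (psubst σ u) w) U W

/-! ### Occurrences as positions -/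

/-- Directions inside a term. -/
inductive Dir : Type where
  | left | right | down
  deriving DecidableEq

/-- Positions (occurrences) in a term. -/
abbrev Pos := List Dir

/-- The subterm of `t` at position `p` (if any). -/
def subtermAt : Lam → Pos → Option Lam
  | t, [] => some t
  | app a _, Dir.left :: p => subtermAt a p
  | app _ b, Dir.right :: p => subtermAt b p
  | abs a, Dir.down :: p => subtermAt a p
  | _, _ :: _ => none

/-- Replace the subterm of `t` at position `p` by `s` (if the position exists). -/
def replaceAt : Lam → Pos → Lam → Option Lam
  | _, [], s => some s
  | app a b, Dir.left :: p, s => (replaceAt a p s).map (fun a' => app a' b)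
  | app a b, Dir.right :: p, s => (replaceAt b p s).map (fun b' => app a b')
  | abs a, Dir.down :: p, s => (replaceAt a p s).map Lam.abs
  | _, _ :: _, _ => none

/-- `OccOf x t p` : position `p` is an occurrence in `t` of the free variable `x`
(index seen from the root, hence shifted by the number of binders crossed). -/
def OccOf (x : ℕ) (t : Lam) (p : Pos) : Prop :=
  subtermAt t p = some (var (x + p.count Dir.down))

/-- `ArgOf t p V` : `V` is the maximal list of arguments, in `t`, of the occurrence
sitting at position `p`; i.e. `([] V)` is the applicative context of that occurrence. -/
def ArgOf (t : Lam) (p : Pos) (V : List Lam) : Prop :=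
  ∃ (q : Pos) (h : Lam),
    p = q ++ List.replicate V.length Dir.left ∧
    (∀ q' : Pos, q ≠ q' ++ [Dir.left]) ∧
    subtermAt t q = some (mkApps h V) ∧ subtermAt t p = some h

/-- `InArgOfOcc x t p q` : `q` is an occurrence of `x` in `t` and the position `p` lies
inside one of the elements of `Arg(x_[q], t)`. -/
def InArgOfOcc (x : ℕ) (t : Lam) (p q : Pos) : Prop :=
  OccOf x t q ∧ ∃ (r : Pos) (n : ℕ),
    q = r ++ List.replicate n Dir.left ∧
    (∀ r' : Pos, r ≠ r' ++ [Dir.left]) ∧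
    ∃ (j : ℕ) (s : Pos), j < n ∧ p = r ++ List.replicate j Dir.left ++ Dir.right :: s

/-- The occurrence `p` of `x` is pure in `t` : no other occurrence `q` of `x` in `t`
is such that `p` occurs in one of the elements of `Arg(x_[q], t)`. -/
def PureOcc (x : ℕ) (t : Lam) (p : Pos) : Prop :=
  OccOf x t p ∧ ∀ q, q ≠ p → ¬ InArgOfOcc x t p q

/-- Renaming of the free variable `y` into `x`. -/
def rename (y x : ℕ) : Lam → Lam
  | var n => if n = y then var x else var n
  | app a b => app (rename y x a) (rename y x b)
  | abs a => abs (rename (y + 1) (x + 1) a)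

/-- `Residue x u v p p'` : along some β-reduction from `u` to `v`, the occurrence `p'` of
`x` in `v` is a residue (traced copy) of the occurrence `p` of `x` in `u`.  This is
expressed by marking the occurrence `p` of `x` with a fresh variable `y` and tracing the
occurrences of `y`. -/
def Residue (x : ℕ) (u v : Lam) (p p' : Pos) : Prop :=
  ∃ (y : ℕ) (u₀ v₀ : Lam),
    ¬ Free y u ∧
    replaceAt u p (var (y + p.count Dir.down)) = some u₀ ∧
    Steps u₀ v₀ ∧ rename y x v₀ = v ∧ OccOf y v₀ p'

/-- The occurrence `p` of the free variable `0` ("x") in `G` is good with respect to the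
closed term `A` : it is pure in `G` and `u[x:=A]` is solvable for every subterm `u` of
`G` in which this occurrence occurs. -/
def GoodOcc (A G : Lam) (p : Pos) : Prop :=
  PureOcc 0 G p ∧
    ∀ (q : Pos) (u : Lam), q <+: p → subtermAt G q = some u →
      Solvable (subst u (q.count Dir.down) A)

/-! ### Miscellaneous -/

/-- A fixed effective Gödel numbering of λ-terms. -/
def code : Lam → ℕ
  | var n => Nat.pair 0 n
  | app a b => Nat.pair 1 (Nat.pair (code a) (code b))
  | abs a => Nat.pair 2 (code a)

/-- Body `f^k z` of the Church numeral. -/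
def churchBody : ℕ → Lam
  | 0 => var 0
  | k + 1 => app (var 1) (churchBody k)

/-- The Church numeral `c_k = λf λz.(f^k z)`. -/
def church (k : ℕ) : Lam := abs (abs (churchBody k))

/-- `n`-fold abstraction `λx₁…λxₙ.t`. -/
def absN : ℕ → Lam → Lam
  | 0, t => t
  | n + 1, t => abs (absN n t)

/-- Number of symbols of a term. -/
def size : Lam → ℕ
  | var _ => 1
  | app a b => size a + size b + 1
  | abs a => size a + 1

/-- Subterm relation. -/
inductive Subterm : Lam → Lam → Prop
  | refl (t : Lam) : Subterm t t
  | appL {s a : Lam} (b : Lam) : Subterm s a → Subterm s (app a b)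
  | appR (a : Lam) {s b : Lam} : Subterm s b → Subterm s (app a b)
  | abs {s a : Lam} : Subterm s a → Subterm s (Lam.abs a)

/-- `t` contains no subterm of the form `(x u)` for the free variable `x`. -/
def NoVarApp : ℕ → Lam → Prop
  | _, var _ => True
  | x, app a b => a ≠ var x ∧ NoVarApp x a ∧ NoVarApp x b
  | x, abs a => NoVarApp (x + 1) a

/-- Headed by the variable `d` : term of the form `(x V)` with `x = var d`. -/
inductive Headed : ℕ → Lam → Prop
  | var (d : ℕ) : Headed d (var d)
  | app {d : ℕ} {a : Lam} (b : Lam) : Headed d a → Headed d (app a b)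

end Lam



/-!
Takahashi's method. Parallel βΩ-reduction `Par` contracts any set of redexes at once and may
replace an unsolvable subterm by `Ω`; its reflexive–transitive closure is `▷_{βΩ}*`. The complete
development `dev t` contracts every redex of a solvable term and collapses an unsolvable term to
`Ω`, and every `Par`-reduct `s` of `t` satisfies `Par s (dev t)`. So `Par` has the diamond
property and `▷_{βΩ}*` is confluent.

The triangle needs solvability to be reflected by lifting, substitution and `Par`. This holds
because the solvable terms are exactly those typable with strict intersection types, and typings
are reflected by those operations: head normal forms are typable, typings expand along
reductions, and typable terms are solvable by a realizability argument.
-/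

namespace Lam

/-! ### Substitution -/

def scons {α : Type*} (a : α) (f : ℕ → α) : ℕ → α
  | 0 => a
  | n + 1 => f n

def up (σ : ℕ → Lam) : ℕ → Lam
  | 0 => var 0
  | n + 1 => lift 0 (σ n)

def upRen (ρ : ℕ → ℕ) : ℕ → ℕ
  | 0 => 0
  | n + 1 => ρ n + 1

theorem psubst_abs (σ : ℕ → Lam) (a : Lam) : psubst σ (abs a) = abs (psubst (up σ) a) := rfl

theorem up_ren (ρ : ℕ → ℕ) : up (fun n => var (ρ n)) = fun n => var (upRen ρ n) := by
  funext n; cases n <;> simp [up, upRen, lift]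

theorem psubst_psubst_ren (ρ : ℕ → ℕ) (σ : ℕ → Lam) (t : Lam) :
    psubst σ (psubst (fun n => var (ρ n)) t) = psubst (fun n => σ (ρ n)) t := by
  induction t generalizing ρ σ with
  | var n => rfl
  | app a b iha ihb => simp only [psubst, iha, ihb]
  | abs a ih =>
    rw [psubst_abs, psubst_abs, psubst_abs, up_ren, ih]
    congr 2; funext n; cases n <;> rfl

theorem lift_eq_psubst (d : ℕ) (t : Lam) :
    lift d t = psubst (fun n => var (if n < d then n else n + 1)) t := by
  induction t generalizing d with
  | var n => simp only [lift, psubst]; split_ifs <;> rfl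
  | app a b iha ihb => simp only [lift, psubst, iha, ihb]
  | abs a ih =>
    rw [lift, ih, psubst_abs, up_ren]
    congr 2; funext n; cases n <;> simp only [upRen] <;> split_ifs <;> first | rfl | omega

theorem lift_zero_eq_psubst (t : Lam) : lift 0 t = psubst (fun n => var (n + 1)) t := by
  simp [lift_eq_psubst]

theorem psubst_ren_psubst (σ : ℕ → Lam) (ρ : ℕ → ℕ) (t : Lam) :
    psubst (fun n => var (ρ n)) (psubst σ t) =
      psubst (fun n => psubst (fun k => var (ρ k)) (σ n)) t := by
  induction t generalizing σ ρ with
  | var n => rfl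
  | app a b iha ihb => simp only [psubst, iha, ihb]
  | abs a ih =>
    rw [psubst_abs, psubst_abs, psubst_abs, up_ren, ih]
    congr 2; funext n; cases n with
    | zero => rfl
    | succ n => simp only [up, lift_zero_eq_psubst, psubst_psubst_ren]; rfl

theorem psubst_psubst (σ τ : ℕ → Lam) (t : Lam) :
    psubst τ (psubst σ t) = psubst (fun n => psubst τ (σ n)) t := by
  induction t generalizing σ τ with
  | var n => rfl
  | app a b iha ihb => simp only [psubst, iha, ihb]
  | abs a ih =>
    rw [psubst_abs, psubst_abs, psubst_abs, ih]
    congr 2; funext n; cases n with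
    | zero => rfl
    | succ n => simp only [up, lift_zero_eq_psubst, psubst_psubst_ren, psubst_ren_psubst]

theorem psubst_var (t : Lam) : psubst var t = t := by
  induction t with
  | var n => rfl
  | app a b iha ihb => simp only [psubst, iha, ihb]
  | abs a ih =>
    rw [psubst_abs, show up var = var by funext n; cases n <;> simp [up, lift], ih]

theorem subst_eq_psubst (t : Lam) (k : ℕ) (u : Lam) :
    subst t k u =
      psubst (fun n => if n = k then u else if k < n then var (n - 1) else var n) t := by
  induction t generalizing k u with
  | var n => rfl
  | app a b iha ihb => simp only [subst, psubst, iha, ihb]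
  | abs a ih =>
    rw [subst, ih, psubst_abs]
    congr 2; funext n; cases n with
    | zero => simp [up]
    | succ n => rw [up]; split_ifs <;> first | omega | simp [lift] <;> omega

theorem lift_psubst (d : ℕ) (σ : ℕ → Lam) (t : Lam) :
    lift d (psubst σ t) = psubst (fun n => lift d (σ n)) t := by
  simp only [lift_eq_psubst d, psubst_ren_psubst]

theorem lift_succ_lift_zero (d : ℕ) (t : Lam) : lift (d + 1) (lift 0 t) = lift 0 (lift d t) := by
  simp only [lift_eq_psubst, psubst_psubst_ren]
  congr 1; funext n; split_ifs <;> first | rfl | omega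

theorem subst_lift_zero (t u : Lam) : subst (lift 0 t) 0 u = t := by
  simp only [lift_zero_eq_psubst, subst_eq_psubst, psubst_psubst_ren]
  simpa using psubst_var t

theorem lift_subst_zero (d : ℕ) (a b : Lam) :
    lift d (subst a 0 b) = subst (lift (d + 1) a) 0 (lift d b) := by
  simp only [subst_eq_psubst, lift_psubst, lift_eq_psubst (d + 1), psubst_psubst_ren]
  congr 1; funext n
  rcases n with _ | n
  · simp [lift_eq_psubst]
  · by_cases h : n < d <;> simp [h, lift]

theorem subst_subst_zero (a b c : Lam) (k : ℕ) :
    subst (subst a 0 b) k c = subst (subst a (k + 1) (lift 0 c)) 0 (subst b k c) := by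
  rw [subst_eq_psubst a 0, subst_eq_psubst a (k + 1), subst_eq_psubst _ k,
    subst_eq_psubst _ 0, psubst_psubst, psubst_psubst]
  congr 1; funext n
  rcases n with _ | n
  · simp [psubst, subst_eq_psubst]
  · rcases lt_trichotomy n k with h | rfl | h
    · simp [psubst, h.ne, h.not_gt]
    · simp [← subst_eq_psubst, subst_lift_zero, subst]
    · simp [psubst, h.ne', h, Nat.ne_zero_of_lt h]

theorem subst_psubst_up (σ : ℕ → Lam) (a v : Lam) :
    subst (psubst (up σ) a) 0 v = psubst (scons v σ) a := by
  rw [subst_eq_psubst, psubst_psubst]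
  congr 1; funext n
  rcases n with _ | n
  · rfl
  · rw [up, scons, ← subst_eq_psubst, subst_lift_zero]

theorem lift_psubst_up (d : ℕ) (σ : ℕ → Lam) (a : Lam) :
    lift (d + 1) (psubst (up σ) a) = psubst (up (fun n => lift d (σ n))) a := by
  rw [lift_psubst]
  congr 1; funext n
  rcases n with _ | n
  · rfl
  · exact lift_succ_lift_zero d (σ n)

theorem subst_Omega (k : ℕ) (u : Lam) : subst Omega k u = Omega := by
  simp [Omega, subst]

/-! ### Solvability -/

theorem Step.lift {t t' : Lam} (h : Step t t') (d : ℕ) : Step (t.lift d) (t'.lift d) := by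
  induction h generalizing d with
  | beta a b => rw [lift_subst_zero]; exact .beta _ _
  | appL b _ ih => exact .appL _ (ih d)
  | appR a _ ih => exact .appR _ (ih d)
  | abs _ ih => exact .abs (ih (d + 1))

theorem Steps.lift {t t' : Lam} (h : Steps t t') (d : ℕ) : Steps (t.lift d) (t'.lift d) :=
  Relation.ReflTransGen.lift (Lam.lift d) (fun _ _ h => h.lift d) _ _ h

theorem Steps.abs_inv {a t : Lam} (h : Steps (abs a) t) : ∃ b, t = abs b ∧ Steps a b := by
  induction h with
  | refl => exact ⟨a, rfl, .refl⟩
  | tail _ hst ih =>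
    obtain ⟨b, rfl, hb⟩ := ih
    cases hst with
    | abs h => exact ⟨_, rfl, hb.tail h⟩

theorem HeadVarApp.lift {t : Lam} (h : HeadVarApp t) (d : ℕ) : HeadVarApp (t.lift d) := by
  induction h with
  | var n => unfold Lam.lift; split_ifs <;> exact .var _
  | app b _ ih => exact .app _ ih

theorem IsHNF.lift {t : Lam} (h : IsHNF t) (d : ℕ) : IsHNF (t.lift d) := by
  induction h generalizing d with
  | head h => exact .head (h.lift d)
  | abs _ ih => exact .abs (ih (d + 1))

theorem IsHNF.solvable {t : Lam} (h : IsHNF t) : Solvable t := ⟨t, .refl, h⟩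

theorem solvable_var (n : ℕ) : Solvable (var n) := (IsHNF.head (.var n)).solvable

theorem Solvable.of_steps {t s : Lam} (h : Steps t s) (hs : Solvable s) : Solvable t :=
  let ⟨w, hsw, hw⟩ := hs
  ⟨w, h.trans hsw, hw⟩

theorem Solvable.lift {t : Lam} (h : Solvable t) (d : ℕ) : Solvable (t.lift d) :=
  let ⟨w, hs, hw⟩ := h
  ⟨w.lift d, hs.lift d, hw.lift d⟩

theorem solvable_abs_iff {a : Lam} : Solvable (abs a) ↔ Solvable a := by
  constructor
  · rintro ⟨w, hs, hw⟩
    obtain ⟨b, rfl, hb⟩ := hs.abs_inv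
    cases hw with
    | head h => cases h
    | abs h => exact ⟨b, hb, h⟩
  · rintro ⟨w, hs, hw⟩
    exact ⟨abs w, Relation.ReflTransGen.lift abs (fun _ _ => .abs) _ _ hs, .abs hw⟩

theorem normal_abs_app_var_zero : Normal (abs (app (var 0) (var 0))) := by
  intro t h
  cases h with | abs h => cases h with | appL _ h => cases h | appR _ h => cases h

theorem eq_Omega_of_steps {t : Lam} (h : Steps Omega t) : t = Omega := by
  induction h with
  | refl => rfl
  | tail _ hst ih =>
    subst ih
    rcases hst with _ | ⟨_, h⟩ | ⟨_, h⟩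
    · rfl
    all_goals exact absurd h (normal_abs_app_var_zero _)

theorem not_solvable_Omega : ¬ Solvable Omega := by
  rintro ⟨w, hs, hw⟩
  rw [eq_Omega_of_steps hs] at hw
  cases hw with | head h => cases h with | app _ h => cases h

/-! ### Strict intersection types -/

/-- `arr L τ` accepts an argument having every type in `L`; with `L = []` the argument (`Ω`,
say) need not be typable at all. -/
inductive Ty : Type
  | atom : Ty
  | arr : List Ty → Ty → Ty

abbrev Ctx : Type := ℕ → List Ty

def insertCtx (k : ℕ) (L : List Ty) (Γ : Ctx) : Ctx :=
  fun n => if n < k then Γ n else if n = k then L else Γ (n - 1)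

theorem insertCtx_zero (L : List Ty) (Γ : Ctx) : insertCtx 0 L Γ = scons L Γ := by
  funext n; cases n <;> simp [insertCtx, scons]

theorem insertCtx_succ_scons (k : ℕ) (L M : List Ty) (Γ : Ctx) :
    insertCtx (k + 1) L (scons M Γ) = scons M (insertCtx k L Γ) := by
  funext n
  rcases n with _ | _ | n
  · rfl
  all_goals simp only [insertCtx, scons]; split_ifs <;> first | rfl | omega

inductive HasType : Ctx → Lam → Ty → Prop
  | var {Γ : Ctx} {n : ℕ} {τ : Ty} : τ ∈ Γ n → HasType Γ (var n) τ
  | app {Γ : Ctx} {a b : Lam} {L : List Ty} {τ : Ty} :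
      HasType Γ a (.arr L τ) → (∀ σ ∈ L, HasType Γ b σ) → HasType Γ (app a b) τ
  | abs {Γ : Ctx} {a : Lam} {L : List Ty} {τ : Ty} :
      HasType (scons L Γ) a τ → HasType Γ (abs a) (.arr L τ)

def Typable (t : Lam) : Prop := ∃ Γ τ, HasType Γ t τ

namespace HasType

variable {Γ : Ctx} {t : Lam} {τ : Ty}

theorem mono {Γ' : Ctx} (h : HasType Γ t τ) (hΓ : ∀ n, Γ n ⊆ Γ' n) : HasType Γ' t τ := by
  induction h generalizing Γ' with
  | var h => exact .var (hΓ _ h)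
  | app _ _ iha ihb => exact .app (iha hΓ) fun σ hσ => ihb σ hσ hΓ
  | abs _ ih => exact .abs (ih fun n => by cases n <;> simp [scons, hΓ])

theorem of_lift {d : ℕ} (h : HasType Γ (t.lift d) τ) :
    HasType (fun n => Γ (if n < d then n else n + 1)) t τ := by
  induction t generalizing Γ τ d with
  | var n =>
    unfold Lam.lift at h
    split_ifs at h with hn <;> cases h with | var h => exact .var (by simpa [hn] using h)
  | app a b iha ihb =>
    cases h with | app ha hb => exact .app (iha ha) fun σ hσ => ihb (hb σ hσ)
  | abs a ih =>
    cases h with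
    | abs ha =>
      refine .abs ?_
      convert ih ha using 1
      funext n; cases n <;> simp [scons]; split_ifs <;> rfl

theorem of_lift_zero {L : List Ty} (h : HasType (scons L Γ) (t.lift 0) τ) : HasType Γ t τ := by
  simpa [scons] using h.of_lift

theorem insertCtx_mono {k : ℕ} {L L' : List Ty} (h : HasType (insertCtx k L Γ) t τ)
    (hL : L ⊆ L') : HasType (insertCtx k L' Γ) t τ :=
  h.mono fun n => by unfold insertCtx; split_ifs <;> simp [hL]

theorem exists_insertCtx_of_forall {k : ℕ} {v : Lam} {L₀ : List Ty}
    (h : ∀ σ ∈ L₀, ∃ L, HasType (insertCtx k L Γ) t σ ∧ ∀ ρ ∈ L, HasType Γ v ρ) :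
    ∃ L, (∀ σ ∈ L₀, HasType (insertCtx k L Γ) t σ) ∧ ∀ ρ ∈ L, HasType Γ v ρ := by
  induction L₀ with
  | nil => exact ⟨[], by simp, by simp⟩
  | cons σ L₀ ih =>
    obtain ⟨L, ht, hv⟩ := h σ List.mem_cons_self
    obtain ⟨L', ht', hv'⟩ := ih fun τ hτ => h τ (List.mem_cons_of_mem _ hτ)
    refine ⟨L ++ L', ?_, fun ρ hρ => ?_⟩
    · rintro τ (_ | ⟨_, hτ⟩)
      · exact ht.insertCtx_mono (List.subset_append_left _ _)
      · exact (ht' τ hτ).insertCtx_mono (List.subset_append_right _ _)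
    · rcases List.mem_append.1 hρ with hρ | hρ
      exacts [hv ρ hρ, hv' ρ hρ]

theorem of_subst {k : ℕ} {v : Lam} (h : HasType Γ (t.subst k v) τ) :
    ∃ L, HasType (insertCtx k L Γ) t τ ∧ ∀ σ ∈ L, HasType Γ v σ := by
  induction t generalizing Γ τ k v with
  | var n =>
    unfold subst at h
    split_ifs at h with h₁ h₂
    · exact ⟨[τ], .var (by simp [insertCtx, h₁]), by simpa using h⟩
    all_goals
      cases h with
      | var h => exact ⟨[], .var (by unfold insertCtx; split_ifs <;> omega), by simp⟩
  | app a b iha ihb =>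
    cases h with
    | app ha hb =>
      obtain ⟨L₁, ha, hv₁⟩ := iha ha
      obtain ⟨L₂, hb, hv₂⟩ := exists_insertCtx_of_forall fun σ hσ => ihb (hb σ hσ)
      refine ⟨L₁ ++ L₂, .app (ha.insertCtx_mono (List.subset_append_left _ _))
        fun σ hσ => (hb σ hσ).insertCtx_mono (List.subset_append_right _ _), fun σ hσ => ?_⟩
      rcases List.mem_append.1 hσ with hσ | hσ
      exacts [hv₁ σ hσ, hv₂ σ hσ]
  | abs a ih =>
    cases h with
    | abs ha =>
      obtain ⟨L, ha, hv⟩ := ih ha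
      rw [insertCtx_succ_scons] at ha
      exact ⟨L, .abs ha, fun σ hσ => (hv σ hσ).of_lift_zero⟩

end HasType

/-! ### Realizability -/

def Lifts : Lam → Lam → Prop := Relation.ReflTransGen fun t w => ∃ d, w = t.lift d

theorem Lifts.step {t w s : Lam} (hw : Lifts t w) (h : Step t s) :
    ∃ s', Step w s' ∧ Lifts s s' := by
  induction hw with
  | refl => exact ⟨s, h, .refl⟩
  | tail _ hd ih =>
    obtain ⟨s', hs', hss'⟩ := ih
    obtain ⟨d, rfl⟩ := hd
    exact ⟨s'.lift d, hs'.lift d, hss'.tail ⟨d, rfl⟩⟩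

theorem HeadVarApp.of_lifts {t w : Lam} (h : HeadVarApp t) (hw : Lifts t w) : HeadVarApp w := by
  induction hw with
  | refl => exact h
  | tail _ hd ih => obtain ⟨d, rfl⟩ := hd; exact ih.lift d

mutual

/-- Closing the arrow clause under lifts `w` of `t` is what keeps realizability stable when an
environment is pushed under a binder. -/
def Realizes : Ty → Lam → Prop
  | .atom, t => Solvable t
  | .arr L τ, t => Solvable t ∧ ∀ w, Lifts t w → ∀ v, RealizesAll L v → Realizes τ (app w v)

def RealizesAll : List Ty → Lam → Prop
  | [], _ => True
  | σ :: L, v => Realizes σ v ∧ RealizesAll L v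

end

theorem realizesAll_iff {L : List Ty} {v : Lam} : RealizesAll L v ↔ ∀ σ ∈ L, Realizes σ v := by
  induction L with
  | nil => simp [RealizesAll]
  | cons σ L ih => simp [RealizesAll, ih]

namespace Realizes

theorem solvable {τ : Ty} {t : Lam} (h : Realizes τ t) : Solvable t := by
  cases τ with
  | atom => exact h
  | arr L τ => exact h.1

theorem lift {τ : Ty} {t : Lam} (h : Realizes τ t) (d : ℕ) : Realizes τ (t.lift d) := by
  cases τ with
  | atom => exact Solvable.lift h d
  | arr L τ => exact ⟨h.1.lift d, fun w hw => h.2 w (.head ⟨d, rfl⟩ hw)⟩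

theorem of_step : ∀ {τ : Ty} {t s : Lam}, Step t s → Realizes τ s → Realizes τ t
  | .atom, _, _, hts, h => Solvable.of_steps (.single hts) h
  | .arr _ _, _, _, hts, h =>
    ⟨Solvable.of_steps (.single hts) h.1, fun _ hw v hv =>
      let ⟨s', hs', hss'⟩ := hw.step hts
      of_step (.appL v hs') (h.2 s' hss' v hv)⟩

end Realizes

theorem HeadVarApp.realizes : ∀ {τ : Ty} {t : Lam}, HeadVarApp t → Realizes τ t
  | .atom, _, h => (IsHNF.head h).solvable
  | .arr _ _, _, h =>
    ⟨(IsHNF.head h).solvable, fun _ hw v _ => (HeadVarApp.app v (h.of_lifts hw)).realizes⟩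

def RealizesCtx (Γ : Ctx) (θ : ℕ → Lam) : Prop := ∀ x, ∀ σ ∈ Γ x, Realizes σ (θ x)

theorem RealizesCtx.cons {Γ : Ctx} {θ : ℕ → Lam} (hθ : RealizesCtx Γ θ) {L : List Ty} {v : Lam}
    (hv : RealizesAll L v) : RealizesCtx (scons L Γ) (scons v θ)
  | 0 => realizesAll_iff.1 hv
  | x + 1 => hθ x

theorem RealizesCtx.up {Γ : Ctx} {θ : ℕ → Lam} (hθ : RealizesCtx Γ θ) (L : List Ty) :
    RealizesCtx (scons L Γ) (up θ)
  | 0 => fun _ _ => (HeadVarApp.var 0).realizes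
  | x + 1 => fun σ hσ => (hθ x σ hσ).lift 0

theorem Lifts.abs_psubst_up {Γ : Ctx} {θ : ℕ → Lam} {a w : Lam}
    (hw : Lifts (abs (psubst (up θ) a)) w) (hθ : RealizesCtx Γ θ) :
    ∃ θ', RealizesCtx Γ θ' ∧ w = abs (psubst (up θ') a) := by
  induction hw with
  | refl => exact ⟨θ, hθ, rfl⟩
  | tail _ hd ih =>
    obtain ⟨θ', hθ', rfl⟩ := ih
    obtain ⟨d, rfl⟩ := hd
    exact ⟨fun n => (θ' n).lift d, fun x σ hσ => (hθ' x σ hσ).lift d,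
      congrArg abs (lift_psubst_up ..)⟩

theorem HasType.realizes {Γ : Ctx} {t : Lam} {τ : Ty} (h : HasType Γ t τ) {θ : ℕ → Lam}
    (hθ : RealizesCtx Γ θ) : Realizes τ (psubst θ t) := by
  induction h generalizing θ with
  | var h => exact hθ _ _ h
  | app _ _ iha ihb => exact (iha hθ).2 _ .refl _ (realizesAll_iff.2 fun σ hσ => ihb σ hσ hθ)
  | abs _ ih =>
    refine ⟨solvable_abs_iff.2 (ih (hθ.up _)).solvable, fun w hw v hv => ?_⟩
    obtain ⟨θ', hθ', rfl⟩ := hw.abs_psubst_up hθ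
    refine Realizes.of_step (.beta _ _) ?_
    rw [subst_psubst_up]
    exact ih (hθ'.cons hv)

theorem Typable.solvable {t : Lam} (h : Typable t) : Solvable t := by
  obtain ⟨Γ, τ, h⟩ := h
  simpa [psubst_var] using (h.realizes (θ := var) fun x _ _ => (HeadVarApp.var x).realizes).solvable

theorem not_hasType_Omega {Γ : Ctx} {τ : Ty} : ¬ HasType Γ Omega τ :=
  fun h => not_solvable_Omega (Typable.solvable ⟨Γ, τ, h⟩)

/-! ### Parallel βΩ-reduction -/

inductive Par : Lam → Lam → Prop
  | var (n : ℕ) : Par (var n) (var n)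
  | app {a a' b b' : Lam} : Par a a' → Par b b' → Par (app a b) (app a' b')
  | abs {a a' : Lam} : Par a a' → Par (abs a) (abs a')
  | beta {a a' b b' : Lam} : Par a a' → Par b b' → Par (app (abs a) b) (a'.subst 0 b')
  | omega {t : Lam} : ¬ Solvable t → Par t Omega

namespace Par

theorem refl : ∀ t, Par t t
  | .var n => .var n
  | .app a b => .app (refl a) (refl b)
  | .abs a => .abs (refl a)

end Par

theorem Step.par {t s : Lam} (h : Step t s) : Par t s := by
  induction h with
  | beta a b => exact .beta (.refl a) (.refl b)
  | appL b _ ih => exact .app ih (.refl b)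
  | appR a _ ih => exact .app (.refl a) ih
  | abs _ ih => exact .abs ih

theorem OmegaStep.par {t s : Lam} (h : OmegaStep t s) : Par t s := by
  induction h with
  | unsolv h => exact .omega h
  | appL b _ ih => exact .app ih (.refl b)
  | appR a _ ih => exact .app (.refl a) ih
  | abs _ ih => exact .abs ih

theorem HasType.of_par {Γ : Ctx} {t s : Lam} {τ : Ty} (hts : Par t s) (h : HasType Γ s τ) :
    HasType Γ t τ := by
  induction hts generalizing Γ τ with
  | var n => exact h
  | app _ _ iha ihb => cases h with | app ha hb => exact .app (iha ha) fun σ hσ => ihb (hb σ hσ)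
  | abs _ ih => cases h with | abs ha => exact .abs (ih ha)
  | beta _ _ iha ihb =>
    obtain ⟨L, ha, hb⟩ := h.of_subst
    exact .app (.abs (iha (insertCtx_zero L Γ ▸ ha))) fun σ hσ => ihb (hb σ hσ)
  | omega _ => exact absurd h not_hasType_Omega

theorem HasType.of_steps {Γ : Ctx} {t s : Lam} {τ : Ty} (hts : Steps t s) (h : HasType Γ s τ) :
    HasType Γ t τ := by
  induction hts with
  | refl => exact h
  | tail _ hst ih => exact ih (h.of_par hst.par)

theorem HeadVarApp.hasType {t : Lam} (h : HeadVarApp t) :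
    ∃ k, ∀ τ, HasType (fun _ => [(Ty.arr [])^[k] τ]) t τ := by
  induction h with
  | var n => exact ⟨0, fun τ => .var (by simp)⟩
  | app b _ ih =>
    obtain ⟨k, hk⟩ := ih
    exact ⟨k + 1, fun τ => .app (hk (.arr [] τ)) (by simp)⟩

theorem IsHNF.hasType {t : Lam} (h : IsHNF t) : ∃ A τ, HasType (fun _ => [A]) t τ := by
  induction h with
  | head h =>
    obtain ⟨k, hk⟩ := h.hasType
    exact ⟨_, .atom, hk .atom⟩
  | abs _ ih =>
    obtain ⟨A, τ, hA⟩ := ih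
    refine ⟨A, .arr [A] τ, .abs ?_⟩
    convert hA using 1
    funext n; cases n <;> rfl

theorem solvable_iff_typable {t : Lam} : Solvable t ↔ Typable t := by
  refine ⟨fun ⟨w, htw, hw⟩ => ?_, Typable.solvable⟩
  obtain ⟨A, τ, hA⟩ := hw.hasType
  exact ⟨_, τ, hA.of_steps htw⟩

theorem Solvable.of_par {t s : Lam} (hts : Par t s) (h : Solvable s) : Solvable t := by
  obtain ⟨Γ, τ, h⟩ := solvable_iff_typable.1 h
  exact Typable.solvable ⟨Γ, τ, h.of_par hts⟩

theorem Solvable.of_lift {t : Lam} {d : ℕ} (h : Solvable (t.lift d)) : Solvable t := by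
  obtain ⟨Γ, τ, h⟩ := solvable_iff_typable.1 h
  exact Typable.solvable ⟨_, τ, h.of_lift⟩

theorem Solvable.of_subst {t v : Lam} {k : ℕ} (h : Solvable (t.subst k v)) : Solvable t := by
  obtain ⟨Γ, τ, h⟩ := solvable_iff_typable.1 h
  obtain ⟨L, h, -⟩ := h.of_subst
  exact Typable.solvable ⟨_, τ, h⟩

theorem not_solvable_app_Omega (b : Lam) : ¬ Solvable (app Omega b) := by
  intro h
  obtain ⟨Γ, τ, h⟩ := solvable_iff_typable.1 h
  cases h with | app h _ => exact not_hasType_Omega h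

namespace Par

theorem lift {t s : Lam} (h : Par t s) (d : ℕ) : Par (t.lift d) (s.lift d) := by
  induction h generalizing d with
  | var n => exact refl _
  | app _ _ iha ihb => exact .app (iha d) (ihb d)
  | abs _ ih => exact .abs (ih (d + 1))
  | beta _ _ iha ihb => rw [lift_subst_zero]; exact .beta (iha (d + 1)) (ihb d)
  | omega h => exact .omega fun hs => h hs.of_lift

theorem subst {a a' b b' : Lam} (ha : Par a a') (hb : Par b b') (k : ℕ) :
    Par (a.subst k b) (a'.subst k b') := by
  induction ha generalizing k b b' with
  | var n => unfold Lam.subst; split_ifs; exacts [hb, refl _, refl _]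
  | app _ _ iha ihb => exact .app (iha hb k) (ihb hb k)
  | abs _ ih => exact .abs (ih (hb.lift 0) (k + 1))
  | beta _ _ iha ihc => rw [subst_subst_zero]; exact .beta (iha (hb.lift 0) (k + 1)) (ihc hb k)
  | omega h => rw [subst_Omega]; exact .omega fun hs => h hs.of_subst

theorem abs_abs_inv {a a' : Lam} (h : Par a.abs a'.abs) : Par a a' := by
  cases h with
  | abs h => exact h

end Par

open Classical in
noncomputable def dev : Lam → Lam
  | var n => var n
  | abs a => if Solvable (abs a) then abs (dev a) else Omega
  | app (abs a) b => if Solvable (app (abs a) b) then (dev a).subst 0 (dev b) else Omega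
  | app a b => if Solvable (app a b) then app (dev a) (dev b) else Omega

theorem dev_of_not_solvable {t : Lam} (h : ¬ Solvable t) : dev t = Omega := by
  match t with
  | var n => exact absurd (solvable_var n) h
  | app (abs _) _ | app (var _) _ | app (app _ _) _ | abs _ => simp [dev, h]

theorem Par.par_dev_of_not_solvable {t s : Lam} (h : Par t s) (ht : ¬ Solvable t) :
    Par s t.dev :=
  dev_of_not_solvable ht ▸ .omega fun hs => ht (hs.of_par h)

/-- Induction on `t` only provides the hypothesis for `abs a`, not for the body of a redex
`app (abs a) b`; this recovers it. -/
theorem Par.par_dev_of_abs {a s : Lam} (ih : ∀ {s}, Par a.abs s → Par s a.abs.dev)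
    (h : Par a s) : Par s a.dev := by
  by_cases ha : Solvable a.abs
  · have := ih (.abs h)
    simp only [Lam.dev, ha, if_true] at this
    exact this.abs_abs_inv
  · exact h.par_dev_of_not_solvable (mt solvable_abs_iff.2 ha)

theorem Par.par_dev {t s : Lam} (h : Par t s) : Par s t.dev := by
  induction t generalizing s with
  | var n => cases h with | var => exact .var n | omega h' => exact absurd (solvable_var n) h'
  | abs a ih =>
    by_cases ht : Solvable a.abs
    swap; · exact h.par_dev_of_not_solvable ht
    cases h with
    | abs h => simp only [Lam.dev, ht, if_true]; exact .abs (ih h)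
    | omega h' => exact absurd ht h'
  | app a b iha ihb =>
    by_cases ht : Solvable (a.app b)
    swap; · exact h.par_dev_of_not_solvable ht
    cases h with
    | omega h' => exact absurd ht h'
    | beta ha hb =>
      simp only [Lam.dev, ht, if_true]
      exact (par_dev_of_abs iha ha).subst (ihb hb) 0
    | app ha hb =>
      cases a with
      | abs c =>
        simp only [Lam.dev, ht, if_true]
        cases ha with
        | abs hc => exact .beta (par_dev_of_abs iha hc) (ihb hb)
        | omega hc =>
          rw [dev_of_not_solvable (mt solvable_abs_iff.2 hc), subst_Omega]
          exact .omega (not_solvable_app_Omega _)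
      | var _ | app _ _ => simp only [Lam.dev, ht, if_true]; exact .app (iha ha) (ihb hb)

theorem BOSteps.app {a a' b b' : Lam} (ha : BOSteps a a') (hb : BOSteps b b') :
    BOSteps (a.app b) (a'.app b') :=
  Relation.ReflTransGen.trans (b := a'.app b)
    (Relation.ReflTransGen.lift (p := BOStep) (fun x => x.app b)
      (fun _ _ => Or.imp (Step.appL b) (OmegaStep.appL b)) _ _ ha)
    (Relation.ReflTransGen.lift (p := BOStep) (fun x => a'.app x)
      (fun _ _ => Or.imp (Step.appR a') (OmegaStep.appR a')) _ _ hb)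

theorem BOSteps.abs {a a' : Lam} (h : BOSteps a a') : BOSteps a.abs a'.abs :=
  Relation.ReflTransGen.lift (p := BOStep) Lam.abs (fun _ _ => Or.imp Step.abs OmegaStep.abs) _ _ h

theorem Par.boSteps {t s : Lam} (h : Par t s) : BOSteps t s := by
  induction h with
  | var n => exact .refl
  | app _ _ iha ihb => exact iha.app ihb
  | abs _ ih => exact ih.abs
  | beta _ _ iha ihb => exact (iha.abs.app ihb).tail (.inl (.beta _ _))
  | omega h => exact .single (.inr (.unsolv h))

theorem reflTransGen_par_eq_boSteps : Relation.ReflTransGen Par = BOSteps :=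
  le_antisymm (Relation.reflTransGen_closed fun _ _ => Par.boSteps)
    (Relation.ReflTransGen.mono fun _ _ h => h.elim Step.par OmegaStep.par)

end Lam

open Lam in
/-- `▷_{βΩ}*` satisfies the Church–Rosser property. -/
theorem betaOmega_churchRosser (t t₁ t₂ : Lam) (h1 : BOSteps t t₁) (h2 : BOSteps t t₂) :
    ∃ t₃, BOSteps t₁ t₃ ∧ BOSteps t₂ t₃ := by
  rw [← reflTransGen_par_eq_boSteps] at h1 h2 ⊢
  exact Relation.church_rosser
    (fun t _ _ h₁ h₂ => ⟨t.dev, .single h₁.par_dev, .single h₂.par_dev⟩) h1 h2
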